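/- The sign pattern of the invariant Hermitian form on the Jantzen quotients (Proposition 4.8): let k > 0 and for e ∈ ℝ and s ∈ ℕ set P_s(e) = ∏_{l=1}^{s} (k²/2 + e·(l − 1/2)²). Then: (a) if e ≥ 0, then P_s(e) > 0 for every s ∈ ℕ; (b) if e = e_m = −k²/(2·(m + 1/2)²) for some m ∈ ℕ, then P_s(e) > 0 for every s ≤ m and P_s(e) = 0 for every s > m; (c) if e < 0 and e ∉ E_b, then there exist s, t ∈ ℕ with P_s(e) > 0 and P_t(e) < 0 (the form is not of definite sign). -/

import Mathlib

noncomputable section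

/-- The finite product `P_s(e) = ∏_{l=1}^{s} (k²/2 + e·(l − 1/2)²)` of real numbers. -/
def Pprod (k e : ℝ) (s : ℕ) : ℝ :=
  ∏ l ∈ Finset.Icc 1 s, (k ^ 2 / 2 + e * ((l : ℝ) - 1 / 2) ^ 2)

/-- The bound-state spectrum `E_b = {−k²/(2·(m + 1/2)²) : m ∈ ℕ}`. -/
def Eb (k : ℝ) : Set ℝ := {e | ∃ m : ℕ, e = -k ^ 2 / (2 * ((m : ℝ) + 1 / 2) ^ 2)}

/-
At `e = e_m` the factor `k²/2 + e(l − 1/2)²` is a positive multiple of `(m + 1/2)² − (l − 1/2)²`,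
so it is positive for `l ≤ m` and vanishes at `l = m + 1`. For `e < 0` off `E_b` no factor
vanishes, while the factors eventually become negative; cutting the product just before the
first non-positive factor gives a positive `P_t`, and one more factor makes `P_{t+1}` negative.
-/

def Pfactor (k e : ℝ) (l : ℕ) : ℝ := k ^ 2 / 2 + e * ((l : ℝ) - 1 / 2) ^ 2

namespace Pfactor

variable {k e : ℝ}

theorem succ (k e : ℝ) (m : ℕ) :
    Pfactor k e (m + 1) = k ^ 2 / 2 + e * ((m : ℝ) + 1 / 2) ^ 2 := by
  simp only [Pfactor]
  push_cast
  ring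

theorem pos_of_nonneg (hk : k ≠ 0) (he : 0 ≤ e) (l : ℕ) : 0 < Pfactor k e l := by
  unfold Pfactor
  positivity

theorem at_bound_state (k : ℝ) (m l : ℕ) :
    Pfactor k (-k ^ 2 / (2 * ((m : ℝ) + 1 / 2) ^ 2)) l =
      k ^ 2 / 2 * (((m : ℝ) + 1 / 2) ^ 2 - ((l : ℝ) - 1 / 2) ^ 2) / ((m : ℝ) + 1 / 2) ^ 2 := by
  unfold Pfactor
  field_simp
  ring

theorem pos_at_bound_state (hk : k ≠ 0) {m l : ℕ} (hl1 : 1 ≤ l) (hlm : l ≤ m) :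
    0 < Pfactor k (-k ^ 2 / (2 * ((m : ℝ) + 1 / 2) ^ 2)) l := by
  have hl1 : (1 : ℝ) ≤ l := by exact_mod_cast hl1
  have hlm : (l : ℝ) ≤ m := by exact_mod_cast hlm
  have hsq : ((l : ℝ) - 1 / 2) ^ 2 < ((m : ℝ) + 1 / 2) ^ 2 := by
    apply sq_lt_sq' <;> linarith
  rw [at_bound_state]
  have : 0 < ((m : ℝ) + 1 / 2) ^ 2 - ((l : ℝ) - 1 / 2) ^ 2 := by linarith
  positivity

theorem succ_at_bound_state (k : ℝ) (m : ℕ) :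
    Pfactor k (-k ^ 2 / (2 * ((m : ℝ) + 1 / 2) ^ 2)) (m + 1) = 0 := by
  rw [at_bound_state]
  push_cast
  ring

theorem succ_ne_zero_of_notMem_Eb (he : e ∉ Eb k) (m : ℕ) : Pfactor k e (m + 1) ≠ 0 := by
  intro h
  refine he ⟨m, ?_⟩
  rw [succ] at h
  field_simp
  linarith

theorem exists_succ_nonpos (he : e < 0) : ∃ n : ℕ, Pfactor k e (n + 1) ≤ 0 := by
  obtain ⟨n, hn⟩ := exists_nat_ge (k ^ 2 / (-2 * e))
  refine ⟨n, ?_⟩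
  have hsq : (n : ℝ) ≤ ((n : ℝ) + 1 / 2) ^ 2 := by nlinarith
  have hbound : k ^ 2 / 2 ≤ -e * n := by
    rw [div_le_iff₀ (by linarith)] at hn
    linarith
  rw [succ]
  nlinarith

end Pfactor

namespace Pprod

variable {k e : ℝ}

theorem eq_prod_Pfactor (k e : ℝ) (s : ℕ) :
    Pprod k e s = ∏ l ∈ Finset.Icc 1 s, Pfactor k e l := rfl

@[simp]
theorem zero (k e : ℝ) : Pprod k e 0 = 1 := by
  simp [Pprod]

theorem succ (k e : ℝ) (s : ℕ) : Pprod k e (s + 1) = Pprod k e s * Pfactor k e (s + 1) := by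
  rw [eq_prod_Pfactor, eq_prod_Pfactor, Finset.prod_Icc_succ_top (Nat.le_add_left 1 s)]

theorem pos_of_forall_Pfactor_pos {s : ℕ} (h : ∀ l ∈ Finset.Icc 1 s, 0 < Pfactor k e l) :
    0 < Pprod k e s :=
  Finset.prod_pos h

theorem pos_of_nonneg (hk : k ≠ 0) (he : 0 ≤ e) (s : ℕ) : 0 < Pprod k e s :=
  pos_of_forall_Pfactor_pos fun l _ => Pfactor.pos_of_nonneg hk he l

theorem pos_at_bound_state (hk : k ≠ 0) {m s : ℕ} (hs : s ≤ m) :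
    0 < Pprod k (-k ^ 2 / (2 * ((m : ℝ) + 1 / 2) ^ 2)) s := by
  refine pos_of_forall_Pfactor_pos fun l hl => ?_
  obtain ⟨hl1, hls⟩ := Finset.mem_Icc.mp hl
  exact Pfactor.pos_at_bound_state hk hl1 (hls.trans hs)

theorem eq_zero_at_bound_state (k : ℝ) {m s : ℕ} (hs : m < s) :
    Pprod k (-k ^ 2 / (2 * ((m : ℝ) + 1 / 2) ^ 2)) s = 0 :=
  Finset.prod_eq_zero (i := m + 1) (Finset.mem_Icc.mpr ⟨by omega, hs⟩)
    (Pfactor.succ_at_bound_state k m)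

theorem exists_neg (he : e < 0) (hb : e ∉ Eb k) : ∃ t : ℕ, Pprod k e t < 0 := by
  have hex := Pfactor.exists_succ_nonpos (k := k) he
  set t := Nat.find hex
  have hpos : 0 < Pprod k e t := by
    refine pos_of_forall_Pfactor_pos fun l hl => ?_
    obtain ⟨hl1, hlt⟩ := Finset.mem_Icc.mp hl
    obtain ⟨j, rfl⟩ := Nat.exists_eq_add_of_le' hl1
    exact lt_of_not_ge (Nat.find_min hex (by omega))
  have hneg : Pfactor k e (t + 1) < 0 :=
    (Nat.find_spec hex).lt_of_ne (Pfactor.succ_ne_zero_of_notMem_Eb hb t)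
  exact ⟨t + 1, by rw [succ]; exact mul_neg_of_pos_of_neg hpos hneg⟩

end Pprod

/-- The sign pattern of the invariant Hermitian form on the Jantzen quotients:
(a) if `e ≥ 0` then `P_s(e) > 0` for all `s`; (b) if `e = e_m = −k²/(2(m+1/2)²)` then
`P_s(e) > 0` for `s ≤ m` and `P_s(e) = 0` for `s > m`; (c) if `e < 0` and `e ∉ E_b` then
the form is not of definite sign: some `P_s(e) > 0` and some `P_t(e) < 0`. -/
theorem stmt_19 (k : ℝ) (hk : 0 < k) (e : ℝ) :
    (0 ≤ e → ∀ s : ℕ, 0 < Pprod k e s) ∧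
    (∀ m : ℕ, e = -k ^ 2 / (2 * ((m : ℝ) + 1 / 2) ^ 2) →
      (∀ s ≤ m, 0 < Pprod k e s) ∧ (∀ s, m < s → Pprod k e s = 0)) ∧
    (e < 0 → e ∉ Eb k → ∃ s t : ℕ, 0 < Pprod k e s ∧ Pprod k e t < 0) := by
  refine ⟨Pprod.pos_of_nonneg hk.ne', fun m hm => ?_, fun he hb => ?_⟩
  · subst hm
    exact ⟨fun s => Pprod.pos_at_bound_state hk.ne', fun s => Pprod.eq_zero_at_bound_state k⟩
  · obtain ⟨t, ht⟩ := Pprod.exists_neg he hb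
    exact ⟨0, t, by simp, ht⟩
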